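/- arXiv:1706.01814 — 2 statements merged into one kernel-verified Lean document; each statement's English description precedes it below -/
import Mathlib

section
/- For every positive integer n, the number of divisors of n satisfies τ(n) ≤ √3 · n^{1/2}. -/
/-!
Since `τ` is multiplicative, `τ(n)² / n = ∏_{p^k ∥ n} (k + 1)² / p^k`. The factor `(k + 1)² / p^k`
is at most `9 / 4` for `p = 2` (at `k = 2`), at most `4 / 3` for `p = 3` (at `k = 1`) and at most
`1` for `p ≥ 5`, so `τ(n)² ≤ (9 / 4) (4 / 3) n = 3 n`.
-/

open Finset

lemma four_mul_succ_sq_le_nine_mul_two_pow (a : ℕ) : 4 * (a + 1) ^ 2 ≤ 9 * 2 ^ a := by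
  obtain ha | ha := lt_or_ge a 2
  · interval_cases a <;> norm_num
  induction a, ha using Nat.le_induction with
  | base => norm_num
  | succ a ha ih => rw [pow_succ 2 a]; nlinarith

lemma three_mul_succ_sq_le_four_mul_three_pow (b : ℕ) : 3 * (b + 1) ^ 2 ≤ 4 * 3 ^ b := by
  obtain hb | hb := lt_or_ge b 1
  · interval_cases b; norm_num
  induction b, hb using Nat.le_induction with
  | base => norm_num
  | succ b hb ih => rw [pow_succ 3 b]; nlinarith

lemma succ_sq_le_pow_of_five_le {p : ℕ} (hp : 5 ≤ p) (a : ℕ) : (a + 1) ^ 2 ≤ p ^ a := by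
  induction a with
  | zero => norm_num
  | succ a ih =>
    calc (a + 1 + 1) ^ 2 ≤ (a + 1) ^ 2 * 5 := by ring_nf; omega
      _ ≤ p ^ a * p := Nat.mul_le_mul ih hp
      _ = p ^ (a + 1) := (pow_succ p a).symm

/-- `sup_k (k + 1)² / p^k` for a prime `p`. -/
noncomputable def supSqSuccDivPow : ℕ → ℝ
  | 2 => 9 / 4
  | 3 => 4 / 3
  | _ => 1

lemma one_le_supSqSuccDivPow (p : ℕ) : 1 ≤ supSqSuccDivPow p := by
  unfold supSqSuccDivPow; split <;> norm_num

lemma succ_sq_le_supSqSuccDivPow_mul_pow {p : ℕ} (hp : p.Prime) (k : ℕ) :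
    ((k + 1 : ℕ) : ℝ) ^ 2 ≤ supSqSuccDivPow p * (p : ℝ) ^ k := by
  obtain rfl | rfl | hp5 : p = 2 ∨ p = 3 ∨ 5 ≤ p := by
    have := hp.two_le
    have : p ≠ 4 := by rintro rfl; norm_num at hp
    omega
  · have := (Nat.cast_le (α := ℝ)).2 (four_mul_succ_sq_le_nine_mul_two_pow k)
    push_cast [supSqSuccDivPow] at this ⊢
    linarith
  · have := (Nat.cast_le (α := ℝ)).2 (three_mul_succ_sq_le_four_mul_three_pow k)
    push_cast [supSqSuccDivPow] at this ⊢
    linarith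
  · have := (Nat.cast_le (α := ℝ)).2 (succ_sq_le_pow_of_five_le hp5 k)
    rw [supSqSuccDivPow.eq_3 p (by omega) (by omega), one_mul]
    exact_mod_cast this

lemma prod_supSqSuccDivPow_le_three (s : Finset ℕ) : ∏ p ∈ s, supSqSuccDivPow p ≤ 3 :=
  calc ∏ p ∈ s, supSqSuccDivPow p ≤ ∏ p ∈ s ∪ {2, 3}, supSqSuccDivPow p :=
        prod_le_prod_of_subset_of_one_le subset_union_left
          (fun p _ ↦ zero_le_one.trans (one_le_supSqSuccDivPow p))
          (fun p _ _ ↦ one_le_supSqSuccDivPow p)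
    _ = ∏ p ∈ {2, 3}, supSqSuccDivPow p := by
        refine (prod_subset subset_union_right fun p _ hp ↦ ?_).symm
        simp only [mem_insert, mem_singleton, not_or] at hp
        simp [supSqSuccDivPow, hp.1, hp.2]
    _ = 3 := by norm_num [supSqSuccDivPow]

lemma card_divisors_sq_le_three_mul (n : ℕ) : (#n.divisors : ℝ) ^ 2 ≤ 3 * n := by
  obtain rfl | hn := eq_or_ne n 0
  · simp
  calc (#n.divisors : ℝ) ^ 2 = ∏ p ∈ n.primeFactors, ((n.factorization p + 1 : ℕ) : ℝ) ^ 2 := by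
        rw [Nat.card_divisors hn, Nat.cast_prod, prod_pow]
    _ ≤ ∏ p ∈ n.primeFactors, supSqSuccDivPow p * (p : ℝ) ^ n.factorization p :=
        prod_le_prod (fun _ _ ↦ by positivity)
          fun p hp ↦ succ_sq_le_supSqSuccDivPow_mul_pow (Nat.prime_of_mem_primeFactors hp) _
    _ = (∏ p ∈ n.primeFactors, supSqSuccDivPow p) * n := by
        rw [prod_mul_distrib]
        congr 1
        exact_mod_cast (Nat.prod_primeFactors_pow_factorization hn).symm
    _ ≤ 3 * n := by gcongr; exact prod_supSqSuccDivPow_le_three _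

theorem tau_le_sqrt_three_mul_sqrt_general (n : ℕ) :
    (n.divisors.card : ℝ) ≤ Real.sqrt 3 * Real.sqrt n := by
  rw [← Real.sqrt_mul zero_le_three, Real.le_sqrt (Nat.cast_nonneg _) (by positivity)]
  exact card_divisors_sq_le_three_mul n

theorem tau_le_sqrt_three_mul_sqrt (n : ℕ) (hn : 0 < n) :
    (n.divisors.card : ℝ) ≤ Real.sqrt 3 * Real.sqrt n :=
  tau_le_sqrt_three_mul_sqrt_general n
end

section
/- Let λ(x) := (π/6)√(24x - 1) and F(n) := 2λ(n) - λ(n+1) - λ(n-1) - 2 log λ(n) + log λ(n+1) + log λ(n-1). Then for all integers n ≥ 4, 24π/(24(n+1)-1)^{3/2} - 1/n² < F(n) < 24π/(24(n-1)-1)^{3/2} - 288/(24(n+1)-1)². -/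
open Real

noncomputable def lam (x : ℝ) : ℝ := Real.pi / 6 * Real.sqrt (24 * x - 1)

noncomputable def Ffun (n : ℕ) : ℝ :=
  2 * lam n - lam (n + 1) - lam (n - 1) - 2 * Real.log (lam n)
    + Real.log (lam (n + 1)) + Real.log (lam (n - 1))

set_option maxHeartbeats 1000000 in
theorem F_bounds (n : ℕ) (hn : 4 ≤ n) :
    24 * Real.pi / ((24 * ((n : ℝ) + 1) - 1) ^ ((3 : ℝ) / 2)) - 1 / (n : ℝ) ^ 2 < Ffun n ∧
    Ffun n < 24 * Real.pi / ((24 * ((n : ℝ) - 1) - 1) ^ ((3 : ℝ) / 2))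
      - 288 / (24 * ((n : ℝ) + 1) - 1) ^ 2 := by
  have hn4 : (4:ℝ) ≤ (n:ℝ) := by exact_mod_cast hn
  have hpoly : 288 * (n:ℝ)^2 ≤ ((24*(n:ℝ)-1) - 24) * ((24*(n:ℝ)-1) + 24) := by
    nlinarith [hn4, sq_nonneg ((n:ℝ) - 4)]
  have e2 : 24 * ((n:ℝ) + 1) - 1 = (24 * (n:ℝ) - 1) + 24 := by ring
  have e3 : 24 * ((n:ℝ) - 1) - 1 = (24 * (n:ℝ) - 1) - 24 := by ring
  simp only [Ffun, lam, e2, e3]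
  set s : ℝ := 24 * (n:ℝ) - 1 with hs
  have hsm : (71:ℝ) ≤ s - 24 := by rw [hs]; linarith
  clear_value s
  have hsa : (0:ℝ) < s - 24 := by linarith
  have hs0 : (0:ℝ) < s := by linarith
  have hsc : (0:ℝ) < s + 24 := by linarith
  set a : ℝ := Real.sqrt (s - 24) with hadef
  set b : ℝ := Real.sqrt s with hbdef
  set c : ℝ := Real.sqrt (s + 24) with hcdef
  have ha : 0 < a := Real.sqrt_pos.mpr hsa
  have hb : 0 < b := Real.sqrt_pos.mpr hs0
  have hc : 0 < c := Real.sqrt_pos.mpr hsc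
  have hab : a < b := Real.sqrt_lt_sqrt hsa.le (by linarith)
  have hbc : b < c := Real.sqrt_lt_sqrt hs0.le (by linarith)
  have ha2 : a ^ 2 = s - 24 := Real.sq_sqrt hsa.le
  have hb2 : b ^ 2 = s := Real.sq_sqrt hs0.le
  have hc2 : c ^ 2 = s + 24 := Real.sq_sqrt hsc.le
  have hla : Real.log a = Real.log (s - 24) / 2 := by rw [hadef]; exact Real.log_sqrt hsa.le
  have hlb : Real.log b = Real.log s / 2 := by rw [hbdef]; exact Real.log_sqrt hs0.le
  have hlc : Real.log c = Real.log (s + 24) / 2 := by rw [hcdef]; exact Real.log_sqrt hsc.le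
  have hpi : (0:ℝ) < Real.pi := Real.pi_pos
  -- rpow to powers of sqrt
  have hr : ∀ x : ℝ, 0 < x → x ^ ((3:ℝ)/2) = (Real.sqrt x) ^ 3 := by
    intro x hx
    rw [show ((3:ℝ)/2) = (1/2) * (3:ℕ) by norm_num, Real.rpow_mul hx.le,
      Real.rpow_natCast, ← Real.sqrt_eq_rpow]
  rw [hr _ hsc, hr _ hsa, ← hcdef, ← hadef]
  clear_value a b c
  -- key identity for sqrt part
  have h1 : (b - a) * (a + b) = 24 := by linear_combination hb2 - ha2
  have h2 : (c - b) * (b + c) = 24 := by linear_combination hc2 - hb2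
  have h3 : (c - a) * (a + c) = 48 := by linear_combination hc2 - ha2
  have hkey : (2*b - a - c) * ((a+b) * ((b+c) * (a+c))) = 1152 := by
    linear_combination ((b+c)*(a+c)) * h1 - ((a+b)*(a+c)) * h2 + 24 * h3
  have hP : 0 < (a+b) * ((b+c) * (a+c)) := by positivity
  have hD : 2*b - a - c = 1152 / ((a+b) * ((b+c) * (a+c))) := by
    field_simp
    linarith only [hkey]
  have h8c : (a+b) * ((b+c) * (a+c)) < (2*c) * ((2*c) * (2*c)) := by
    gcongr <;> linarith
  have h8a : (2*a) * ((2*a) * (2*a)) < (a+b) * ((b+c) * (a+c)) := by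
    gcongr <;> linarith
  -- sqrt part bounds
  have hSlow : 144 / c ^ 3 < 2*b - a - c := by
    rw [hD, div_lt_div_iff₀ (by positivity) hP]
    linarith only [h8c]
  have hShigh : 2*b - a - c < 144 / a ^ 3 := by
    rw [hD, div_lt_div_iff₀ hP (by positivity)]
    linarith only [h8a]
  -- log part
  have hp6 : Real.pi / 6 ≠ 0 := by positivity
  have hlog : ∀ x : ℝ, 0 < x → Real.log (Real.pi / 6 * x) = Real.log (Real.pi / 6) + Real.log x :=
    fun x hx => Real.log_mul hp6 hx.ne'
  rw [hlog a ha, hlog b hb, hlog c hc]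
  set u : ℝ := (s - 24) * (s + 24) / s ^ 2 with hu
  have hu0 : 0 < u := by rw [hu]; positivity
  have hune : u ≠ 1 := by
    have hu1 : u < 1 := by
      rw [hu, div_lt_one (by positivity)]
      have hexp : (s - 24) * (s + 24) = s ^ 2 - 576 := by ring
      linarith
    exact ne_of_lt hu1
  have hulog : Real.log u = Real.log (s - 24) + Real.log (s + 24) - 2 * Real.log s := by
    rw [hu, Real.log_div (by positivity) (by positivity), Real.log_mul hsa.ne' hsc.ne',
      Real.log_pow]
    push_cast
    ring
  have hup : Real.log u < -(2 * (288 / s ^ 2)) := by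
    have h := Real.log_lt_sub_one_of_pos hu0 hune
    have hrw : u - 1 = -(2 * (288 / s ^ 2)) := by
      rw [hu]; field_simp; ring
    rw [hrw] at h
    exact h
  have hlo : -(576 / ((s - 24) * (s + 24))) < Real.log u := by
    have hinv : (0:ℝ) < u⁻¹ := by positivity
    have hinvne : u⁻¹ ≠ 1 := by
      intro h; exact hune (by rw [← inv_inv u, h, inv_one])
    have h := Real.log_lt_sub_one_of_pos hinv hinvne
    rw [Real.log_inv] at h
    have hrw : u⁻¹ - 1 = 576 / ((s - 24) * (s + 24)) := by
      rw [hu]; field_simp; ring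
    rw [hrw] at h
    linarith only [h]
  clear_value u
  -- combine for lower bound of log part against -1/n^2
  have hn0 : (0:ℝ) < (n:ℝ) := by linarith
  have hcmp : -(1 / (n:ℝ) ^ 2) ≤ -(576 / ((s - 24) * (s + 24))) / 2 := by
    rw [neg_div, neg_le_neg_iff, div_div, div_le_div_iff₀ (by positivity) (by positivity)]
    linarith only [hpoly]
  -- upper bound for log part: log u / 2 < -288/(s+24)^2
  have hup2 : Real.log u / 2 < -(288 / (s + 24) ^ 2) := by
    have hq1 : Real.log u / 2 < -(288 / s ^ 2) := by linarith only [hup]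
    have hsq : s ^ 2 < (s + 24) ^ 2 := by
      have := pow_lt_pow_left₀ (show s < s + 24 by linarith) hs0.le (two_ne_zero)
      exact this
    have h := div_lt_div_of_pos_left (by norm_num : (0:ℝ) < 288)
      (by positivity : (0:ℝ) < s ^ 2) hsq
    linarith only [h, hq1, hsq]
  -- sqrt part scaled by pi/6
  have hp6pos : (0:ℝ) < Real.pi / 6 := by positivity
  have hS1 : 24 * Real.pi / c ^ 3 < Real.pi / 6 * (2*b - a - c) := by
    have h := mul_lt_mul_of_pos_left hSlow hp6pos
    have heq : Real.pi / 6 * (144 / c ^ 3) = 24 * Real.pi / c ^ 3 := by ring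
    linarith only [h, heq]
  have hS2 : Real.pi / 6 * (2*b - a - c) < 24 * Real.pi / a ^ 3 := by
    have h := mul_lt_mul_of_pos_left hShigh hp6pos
    have heq : Real.pi / 6 * (144 / a ^ 3) = 24 * Real.pi / a ^ 3 := by ring
    linarith only [h, heq]
  have hLeq : Real.log c + Real.log a - 2 * Real.log b = Real.log u / 2 := by
    rw [hla, hlb, hlc, hulog]; ring
  constructor
  · linarith only [hS1, hcmp, hlo, hLeq]
  · linarith only [hS2, hup2, hLeq]
end
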